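/- Let ρ̂ be a Borel probability measure on S × T and let η be ρ̂-integrable. If f : Ω → ℝ satisfies f(x) = ∫_{S×T} aᵀ σ(b*x + c) η(a, b, c) dρ̂(a, b, c) for every x ∈ Ω, then f belongs to the Barron space B and ‖f‖_B ≤ ∫_{S×T} |η(a, b, c)| dρ̂(a, b, c). -/

import Mathlib

open MeasureTheory ENNReal

noncomputable section

abbrev Vec (N : ℕ) := Fin N → ℝ

abbrev Param (N : ℕ) := Vec N × Vec N × Vec N

/-- componentwise ReLU -/
def relu {N : ℕ} (x : Vec N) : Vec N := fun i => max (x i) 0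

/-- graph convolution defined via the orthogonal matrix `U` -/
def conv {N : ℕ} (U : Matrix (Fin N) (Fin N) ℝ) (b x : Vec N) : Vec N :=
  U.mulVec (U.transpose.mulVec b * U.transpose.mulVec x)

/-- The data and standing assumptions of the graph Barron space setting. -/
structure Setting (N : ℕ) where
  U : Matrix (Fin N) (Fin N) ℝ
  W : Submodule ℝ (Vec N)
  dom : Set (Vec N)
  nrm : Vec N → ℝ
  conorm : Vec N → ℝ
  hN : 1 ≤ N
  hU : U.transpose * U = 1
  hdomc : IsCompact dom
  hdomne : dom.Nonempty
  nrm_add : ∀ x y, nrm (x + y) ≤ nrm x + nrm y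
  nrm_smul : ∀ (t : ℝ) (x), nrm (t • x) = |t| * nrm x
  nrm_eq_zero : ∀ x, nrm x = 0 ↔ x = 0
  relu_nrm_le : ∀ x, nrm (relu x) ≤ nrm x
  conorm_add : ∀ b b', b ∈ W → b' ∈ W → conorm (b + b') ≤ conorm b + conorm b'
  conorm_smul : ∀ (t : ℝ) (b), b ∈ W → conorm (t • b) = |t| * conorm b
  conorm_eq_zero : ∀ b, b ∈ W → (conorm b = 0 ↔ b = 0)
  conv_nrm_le : ∀ b ∈ W, ∀ x ∈ dom, nrm (conv U b x) ≤ conorm b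

namespace Setting

variable {N : ℕ} (S : Setting N)

/-- dual norm `‖a‖_* = sup {aᵀx : ‖x‖ ≤ 1}` -/
def dual (a : Vec N) : ℝ :=
  sSup {t : ℝ | ∃ x : Vec N, S.nrm x ≤ 1 ∧ t = ∑ i, a i * x i}

/-- the neuron `aᵀ σ(b*x + c)` -/
def neuron (x : Vec N) (p : Param N) : ℝ :=
  ∑ i, p.1 i * relu (conv S.U p.2.1 x + p.2.2) i

/-- `P_f`: probability measures on `ℝ^N × W × ℝ^N` representing `f` on `Ω`. -/
def reps (f : Vec N → ℝ) : Set (Measure (Param N)) :=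
  {ρ | IsProbabilityMeasure ρ ∧ ρ {p : Param N | p.2.1 ∉ S.W} = 0 ∧
    ∀ x ∈ S.dom, Integrable (S.neuron x) ρ ∧ f x = ∫ p, S.neuron x p ∂ρ}

/-- the weight `‖a‖_* (‖b‖_co + ‖c‖)` -/
def weight (p : Param N) : ℝ := S.dual p.1 * (S.conorm p.2.1 + S.nrm p.2.2)

def cost (ρ : Measure (Param N)) : ℝ≥0∞ :=
  ∫⁻ p, ENNReal.ofReal (S.weight p) ∂ρ

/-- the Barron norm `‖f‖_{B_1} ∈ [0,∞]` -/
def barron (f : Vec N → ℝ) : ℝ≥0∞ :=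
  ⨅ ρ ∈ S.reps f, S.cost ρ

/-- membership in the Barron space `B = B_1` -/
def memB (f : Vec N → ℝ) : Prop :=
  (S.reps f).Nonempty ∧ S.barron f < ⊤

/-- `(a,b,c)` lies in `S × T` -/
def onST (p : Param N) : Prop :=
  S.dual p.1 = 1 ∧ p.2.1 ∈ S.W ∧ S.conorm p.2.1 + S.nrm p.2.2 = 1

/-- output of the shallow GCNN with parameters `θ` -/
def netOut {M : ℕ} (θ : Fin M → Param N) (x : Vec N) : ℝ :=
  (M : ℝ)⁻¹ * ∑ m, S.neuron x (θ m)

/-- the `p`-path norm, `1 ≤ p ≤ ∞` -/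
def pathNorm {M : ℕ} (p : ℝ≥0∞) (θ : Fin M → Param N) : ℝ :=
  if p = ⊤ then ⨆ m, S.weight (θ m)
  else ((M : ℝ)⁻¹ * ∑ m, S.weight (θ m) ^ p.toReal) ^ (p.toReal)⁻¹

/-- the class `C_{Q,p}` of GCNN outputs with `p`-path norm at most `Q` -/
def CQp (Q : ℝ) (p : ℝ≥0∞) : Set (Vec N → ℝ) :=
  {g | ∃ M : ℕ, 1 ≤ M ∧ ∃ θ : Fin M → Param N,
    (∀ m, (θ m).2.1 ∈ S.W) ∧ S.pathNorm p θ ≤ Q ∧ ∀ x ∈ S.dom, g x = S.netOut θ x}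

end Setting


namespace Setting

variable {N : ℕ} (S : Setting N)

lemma nrm_zero : S.nrm 0 = 0 := (S.nrm_eq_zero 0).mpr rfl

lemma nrm_neg (x : Vec N) : S.nrm (-x) = S.nrm x := by
  have h := S.nrm_smul (-1) x
  simpa using h

lemma nrm_nonneg (x : Vec N) : 0 ≤ S.nrm x := by
  have h := S.nrm_add x (-x)
  rw [add_neg_cancel, S.nrm_zero, S.nrm_neg] at h
  linarith

lemma nrm_sum_le {ι : Type*} (s : Finset ι) (g : ι → Vec N) :
    S.nrm (∑ i ∈ s, g i) ≤ ∑ i ∈ s, S.nrm (g i) := by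
  classical
  induction s using Finset.induction_on with
  | empty => simp [S.nrm_zero]
  | insert a s h ih =>
    rw [Finset.sum_insert h, Finset.sum_insert h]
    exact le_trans (S.nrm_add _ _) (by linarith)

lemma nrm_le_mul_norm (x : Vec N) :
    S.nrm x ≤ (∑ i, S.nrm (Pi.single i 1)) * ‖x‖ := by
  classical
  have hx : x = ∑ i, x i • (Pi.single i 1 : Vec N) := by
    funext j
    simp [Pi.single_apply]
  calc S.nrm x = S.nrm (∑ i, x i • (Pi.single i 1 : Vec N)) := by rw [← hx]
    _ ≤ ∑ i, S.nrm (x i • (Pi.single i 1 : Vec N)) := S.nrm_sum_le _ _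
    _ = ∑ i, |x i| * S.nrm (Pi.single i 1) := by simp_rw [S.nrm_smul]
    _ ≤ ∑ i, ‖x‖ * S.nrm (Pi.single i 1) := by
        refine Finset.sum_le_sum fun i _ => ?_
        refine mul_le_mul_of_nonneg_right ?_ (S.nrm_nonneg _)
        rw [← Real.norm_eq_abs]
        exact norm_le_pi_norm x i
    _ = (∑ i, S.nrm (Pi.single i 1)) * ‖x‖ := by rw [← Finset.mul_sum, mul_comm]

lemma nrm_continuous : Continuous S.nrm := by
  set C : ℝ := ∑ i, S.nrm (Pi.single i 1) with hC
  have hC0 : 0 ≤ C := Finset.sum_nonneg fun i _ => S.nrm_nonneg _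
  have habs : ∀ x y : Vec N, |S.nrm x - S.nrm y| ≤ C * ‖x - y‖ := by
    intro x y
    have h1 := S.nrm_add (x - y) y
    rw [sub_add_cancel] at h1
    have h2 := S.nrm_add (y - x) x
    rw [sub_add_cancel] at h2
    have h3 : S.nrm (y - x) = S.nrm (x - y) := by rw [← neg_sub, S.nrm_neg]
    have h4 := S.nrm_le_mul_norm (x - y)
    rw [abs_sub_le_iff]
    constructor <;> [skip; rw [h3] at h2] <;> linarith
  refine (LipschitzWith.of_dist_le_mul (K := ⟨C, hC0⟩) ?_).continuous
  intro x y
  rw [Real.dist_eq, dist_eq_norm]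
  exact habs x y

lemma exists_pos_lower : ∃ m : ℝ, 0 < m ∧ ∀ x : Vec N, m * ‖x‖ ≤ S.nrm x := by
  have hne' : Nonempty (Fin N) := ⟨⟨0, S.hN⟩⟩
  have hcpt : IsCompact (Metric.sphere (0 : Vec N) 1) := isCompact_sphere 0 1
  have hne : (Metric.sphere (0 : Vec N) 1).Nonempty := by
    refine ⟨fun _ => 1, ?_⟩
    simp [mem_sphere_iff_norm, pi_norm_const]
  obtain ⟨x₀, hx₀mem, hx₀min⟩ := hcpt.exists_isMinOn hne S.nrm_continuous.continuousOn
  have hx₀norm : ‖x₀‖ = 1 := by simpa [mem_sphere_iff_norm] using hx₀mem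
  have hx₀ne : x₀ ≠ 0 := by
    intro h; rw [h] at hx₀norm; simp at hx₀norm
  have hm : 0 < S.nrm x₀ := by
    rcases (S.nrm_nonneg x₀).lt_or_eq with h | h
    · exact h
    · exact absurd ((S.nrm_eq_zero x₀).mp h.symm) hx₀ne
  refine ⟨S.nrm x₀, hm, fun x => ?_⟩
  rcases eq_or_ne x 0 with h | h
  · simp [h, S.nrm_zero]
  · have hxn : 0 < ‖x‖ := norm_pos_iff.mpr h
    have hu : (‖x‖⁻¹ • x) ∈ Metric.sphere (0 : Vec N) 1 := by
      simp [mem_sphere_iff_norm, norm_smul, abs_of_pos hxn, inv_mul_cancel₀ hxn.ne']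
    have hmin : S.nrm x₀ ≤ S.nrm (‖x‖⁻¹ • x) := hx₀min hu
    rw [S.nrm_smul, abs_inv, abs_of_pos hxn] at hmin
    rw [mul_comm, ← le_div_iff₀' hxn, div_eq_inv_mul]
    exact hmin

/-- the value set whose supremum defines the dual norm -/
def dSet (a : Vec N) : Set ℝ :=
  {t : ℝ | ∃ x : Vec N, S.nrm x ≤ 1 ∧ t = ∑ i, a i * x i}

lemma dual_eq_sSup (a : Vec N) : S.dual a = sSup (S.dSet a) := rfl

lemma dSet_nonempty (a : Vec N) : (S.dSet a).Nonempty :=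
  ⟨0, 0, by simp [S.nrm_zero], by simp⟩

lemma dSet_bddAbove (a : Vec N) : BddAbove (S.dSet a) := by
  obtain ⟨m, hm, hml⟩ := S.exists_pos_lower
  refine ⟨(∑ i, |a i|) * m⁻¹, ?_⟩
  rintro t ⟨x, hx, rfl⟩
  have hxn : ‖x‖ ≤ m⁻¹ := by
    have h1 := hml x
    rw [← one_div, le_div_iff₀ hm]
    nlinarith
  calc (∑ i, a i * x i) ≤ ∑ i, |a i| * m⁻¹ := by
        refine Finset.sum_le_sum fun i _ => ?_
        have h1 : a i * x i ≤ |a i| * |x i| := by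
          rw [← abs_mul]; exact le_abs_self _
        have h2 : |x i| ≤ ‖x‖ := by
          rw [← Real.norm_eq_abs]; exact norm_le_pi_norm x i
        nlinarith [abs_nonneg (a i)]
    _ = (∑ i, |a i|) * m⁻¹ := by rw [Finset.sum_mul]

lemma mem_dSet_le (a : Vec N) {t : ℝ} (ht : t ∈ S.dSet a) : t ≤ S.dual a :=
  le_csSup (S.dSet_bddAbove a) ht

lemma dual_nonneg (a : Vec N) : 0 ≤ S.dual a :=
  S.mem_dSet_le a ⟨0, by simp [S.nrm_zero], by simp⟩

lemma abs_sum_le_dual (a y : Vec N) : |∑ i, a i * y i| ≤ S.dual a * S.nrm y := by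
  rcases (S.nrm_nonneg y).lt_or_eq with h | h
  · set s := ∑ i, a i * y i with hs
    have h1 : (S.nrm y)⁻¹ * s ≤ S.dual a := by
      refine S.mem_dSet_le a ⟨(S.nrm y)⁻¹ • y, ?_, ?_⟩
      · rw [S.nrm_smul, abs_inv, abs_of_pos h, inv_mul_cancel₀ h.ne']
      · rw [hs, Finset.mul_sum]
        refine Finset.sum_congr rfl fun i _ => ?_
        simp only [Pi.smul_apply, smul_eq_mul]
        ring
    have h2 : (S.nrm y)⁻¹ * (-s) ≤ S.dual a := by
      refine S.mem_dSet_le a ⟨(S.nrm y)⁻¹ • (-y), ?_, ?_⟩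
      · rw [S.nrm_smul, S.nrm_neg, abs_inv, abs_of_pos h, inv_mul_cancel₀ h.ne']
      · rw [hs, mul_neg, Finset.mul_sum, ← Finset.sum_neg_distrib]
        refine Finset.sum_congr rfl fun i _ => ?_
        simp only [Pi.smul_apply, Pi.neg_apply, smul_eq_mul]
        ring
    have h1' : s ≤ S.nrm y * S.dual a := by
      have := mul_le_mul_of_nonneg_left h1 h.le
      rwa [← mul_assoc, mul_inv_cancel₀ h.ne', one_mul] at this
    have h2' : -s ≤ S.nrm y * S.dual a := by
      have := mul_le_mul_of_nonneg_left h2 h.le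
      rwa [← mul_assoc, mul_inv_cancel₀ h.ne', one_mul] at this
    rw [mul_comm]
    exact abs_le.mpr ⟨by linarith, h1'⟩
  · have hy : y = 0 := (S.nrm_eq_zero y).mp h.symm
    simp [hy, S.nrm_zero]

lemma dual_smul_le (t : ℝ) (a : Vec N) : S.dual (t • a) ≤ |t| * S.dual a := by
  refine csSup_le (S.dSet_nonempty _) ?_
  rintro u ⟨x, hx, rfl⟩
  have h1 : (∑ i, a i * x i) ≤ S.dual a := S.mem_dSet_le a ⟨x, hx, rfl⟩
  have h2 : -(∑ i, a i * x i) ≤ S.dual a := by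
    refine S.mem_dSet_le a ⟨-x, by rw [S.nrm_neg]; exact hx, ?_⟩
    rw [← Finset.sum_neg_distrib]
    exact Finset.sum_congr rfl fun i _ => by simp
  have habs : |∑ i, a i * x i| ≤ S.dual a := abs_le.mpr ⟨by linarith, h1⟩
  have heq : (∑ i, (t • a) i * x i) = t * ∑ i, a i * x i := by
    rw [Finset.mul_sum]
    exact Finset.sum_congr rfl fun i _ => by simp [mul_assoc]
  rw [heq]
  calc t * ∑ i, a i * x i ≤ |t * ∑ i, a i * x i| := le_abs_self _
    _ = |t| * |∑ i, a i * x i| := abs_mul _ _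
    _ ≤ |t| * S.dual a := mul_le_mul_of_nonneg_left habs (abs_nonneg t)

lemma neuron_abs_le {x : Vec N} (hx : x ∈ S.dom) {p : Param N} (hb : p.2.1 ∈ S.W) :
    |S.neuron x p| ≤ S.dual p.1 * (S.conorm p.2.1 + S.nrm p.2.2) := by
  have h1 := S.abs_sum_le_dual p.1 (relu (conv S.U p.2.1 x + p.2.2))
  have h2 : S.nrm (relu (conv S.U p.2.1 x + p.2.2)) ≤ S.conorm p.2.1 + S.nrm p.2.2 := by
    refine le_trans (S.relu_nrm_le _) (le_trans (S.nrm_add _ _) ?_)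
    exact add_le_add_left (S.conv_nrm_le _ hb _ hx) _
  exact le_trans h1 (mul_le_mul_of_nonneg_left h2 (S.dual_nonneg _))

lemma neuron_continuous (x : Vec N) : Continuous fun p : Param N => S.neuron x p := by
  unfold Setting.neuron relu conv Matrix.mulVec dotProduct
  fun_prop

end Setting

/-- an integrable-density representation over `S × T` puts `f` in the
Barron space with `‖f‖_B ≤ ∫ |η| dρ̂`. -/
theorem density_representation_in_barron {N : ℕ} (S : Setting N)
    (ρ : Measure (Param N)) (hprob : IsProbabilityMeasure ρ)
    (hsupp : ρ {p : Param N | ¬ S.onST p} = 0)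
    (η : Param N → ℝ) (hη : Integrable η ρ) (f : Vec N → ℝ)
    (hrep : ∀ x ∈ S.dom, f x = ∫ p, S.neuron x p * η p ∂ρ) :
    S.memB f ∧ S.barron f ≤ ENNReal.ofReal (∫ p, |η p| ∂ρ) := by
  classical
  have hη'm : Measurable (hη.1.mk η) := hη.1.stronglyMeasurable_mk.measurable
  set η' : Param N → ℝ := hη.1.mk η with hη'def
  have hae : η =ᵐ[ρ] η' := hη.1.ae_eq_mk
  have honST : ∀ᵐ p ∂ρ, S.onST p := by
    rw [MeasureTheory.ae_iff]; exact hsupp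
  set Φ : Param N → Param N := fun p => (η' p • p.1, p.2) with hΦdef
  have hΦ : Measurable Φ := by
    refine Measurable.prodMk ?_ measurable_snd
    refine measurable_pi_lambda _ fun i => ?_
    simp only [Pi.smul_apply, smul_eq_mul]
    exact hη'm.mul ((measurable_pi_apply i).comp measurable_fst)
  set ρ' : Measure (Param N) := ρ.map Φ with hρ'def
  have hneuronΦ : ∀ (x : Vec N) (p : Param N), S.neuron x (Φ p) = η' p * S.neuron x p := by
    intro x p
    simp only [Setting.neuron, hΦdef, Pi.smul_apply, smul_eq_mul, Finset.mul_sum, mul_assoc]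
  have hWmeas : MeasurableSet {p : Param N | p.2.1 ∉ S.W} := by
    have hcl : IsClosed ((S.W : Set (Vec N))) := S.W.closed_of_finiteDimensional
    exact ((measurable_fst.comp measurable_snd) hcl.measurableSet).compl
  have hmem : ρ' ∈ S.reps f := by
    refine ⟨Measure.isProbabilityMeasure_map hΦ.aemeasurable, ?_, ?_⟩
    · rw [hρ'def, Measure.map_apply hΦ hWmeas]
      refine measure_mono_null ?_ hsupp
      intro p hp honp
      exact hp honp.2.1
    · intro x hx
      have hcont := S.neuron_continuous x
      have haesm' : AEStronglyMeasurable (S.neuron x) ρ' := hcont.aestronglyMeasurable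
      have hint0 : Integrable (fun p => η' p * S.neuron x p) ρ := by
        refine Integrable.mono hη.abs (hη'm.aestronglyMeasurable.mul hcont.aestronglyMeasurable) ?_
        filter_upwards [honST, hae] with p hp hpe
        rw [Real.norm_eq_abs, Real.norm_eq_abs, abs_abs, abs_mul, ← hpe]
        have hb := S.neuron_abs_le hx hp.2.1
        rw [hp.1, hp.2.2, one_mul] at hb
        calc |η p| * |S.neuron x p| ≤ |η p| * 1 := mul_le_mul_of_nonneg_left hb (abs_nonneg _)
          _ = |η p| := mul_one _
      have hcomp : (S.neuron x) ∘ Φ = fun p => η' p * S.neuron x p := funext (hneuronΦ x)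
      have hint : Integrable (S.neuron x) ρ' := by
        rw [hρ'def, integrable_map_measure haesm' hΦ.aemeasurable, hcomp]
        exact hint0
      refine ⟨hint, ?_⟩
      rw [hρ'def, integral_map hΦ.aemeasurable haesm']
      simp_rw [hneuronΦ x]
      rw [hrep x hx]
      refine integral_congr_ae ?_
      filter_upwards [hae] with p hpe
      rw [hpe]; ring
  have hcost : S.cost ρ' ≤ ENNReal.ofReal (∫ p, |η p| ∂ρ) := by
    have h1 : S.cost ρ' ≤ ∫⁻ p, ENNReal.ofReal (S.weight (Φ p)) ∂ρ := by
      rw [hρ'def]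
      exact MeasureTheory.lintegral_map_le _ _
    have h2 : (∫⁻ p, ENNReal.ofReal (S.weight (Φ p)) ∂ρ) ≤ ∫⁻ p, ENNReal.ofReal |η p| ∂ρ := by
      refine lintegral_mono_ae ?_
      filter_upwards [honST, hae] with p hp hpe
      refine ENNReal.ofReal_le_ofReal ?_
      have hw : S.weight (Φ p) = S.dual (η' p • p.1) * (S.conorm p.2.1 + S.nrm p.2.2) := rfl
      rw [hw, hp.2.2, mul_one]
      calc S.dual (η' p • p.1) ≤ |η' p| * S.dual p.1 := S.dual_smul_le _ _
        _ = |η' p| := by rw [hp.1, mul_one]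
        _ = |η p| := by rw [hpe]
    have h3 : (∫⁻ p, ENNReal.ofReal |η p| ∂ρ) = ENNReal.ofReal (∫ p, |η p| ∂ρ) := by
      rw [← MeasureTheory.ofReal_integral_eq_lintegral_ofReal hη.abs
        (Filter.Eventually.of_forall fun p => abs_nonneg _)]
    exact le_trans h1 (le_trans h2 h3.le)
  have hbar : S.barron f ≤ ENNReal.ofReal (∫ p, |η p| ∂ρ) :=
    le_trans (iInf₂_le ρ' hmem) hcost
  exact ⟨⟨⟨ρ', hmem⟩, lt_of_le_of_lt hbar ENNReal.ofReal_lt_top⟩, hbar⟩
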